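/- arXiv:2110.08051 — 3 statements merged into one kernel-verified Lean document; each statement's English description precedes it below -/
import Mathlib

section
/- Let G_A, G_B : ℝ → ℝ be service-time distribution functions (monotone nondecreasing on [0,∞), with 0 ≤ G(v) ≤ 1 for v ≥ 0 and G(v) → 1 as v → ∞), with finite means α_A = ∫₀^∞ (1 − G_A(v)) dv and α_B = ∫₀^∞ (1 − G_B(v)) dv, and assume v ↦ 1 − G_A(v) and v ↦ 1 − G_B(v) are integrable on [0,∞). Let λ_A, λ_B ≥ 0 and p ∈ [0,1]. Let m_A, m_B : ℝ → ℝ be functions with m_A(t) → m_A∞ and m_B(t) → m_B∞ as t → ∞, and suppose the equilibrium equation m_A(t)·λ_A·∫₀ᵗ (1 − G_A(v)) dv = m_B(t)·∫₀ᵗ (p·λ_A·G_A(v) + λ_B)·(1 − G_B(t − v)) dv holds for all t ≥ 0. If λ_A·α_A > 0 and (p·λ_A + λ_B)·α_B > 0, then m_A∞·λ_A·α_A = m_B∞·(p·λ_A + λ_B)·α_B. -/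
open MeasureTheory Filter Real Set Topology

/-!
The left-hand integral converges to `α_A` by definition of the improper integral. On the right,
the substitution `u = t - v` turns the convolution into `∫₀ᵗ f (t - u) (1 - G_B u) du` with
`f = p λ_A G_A + λ_B` bounded on `[0, ∞)`; the integrands are dominated by a multiple of the
integrable `1 - G_B` and converge pointwise to `(p λ_A + λ_B)(1 - G_B u)` because `G_A → 1`.
Dominated convergence and uniqueness of limits give the equilibrium.
-/

section

variable {E : Type*} [NormedAddCommGroup E] [NormedSpace ℝ E]

theorem intervalIntegral_smul_comp_sub_eq_integral_indicator {f : ℝ → ℝ} {g : ℝ → E} {t : ℝ}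
    (ht : 0 ≤ t) :
    ∫ v in (0:ℝ)..t, f v • g (t - v) =
      ∫ u in Ioi 0, (Ioc 0 t).indicator (fun u => f (t - u) • g u) u := by
  have hsub := intervalIntegral.integral_comp_sub_left (a := 0) (b := t)
    (fun u => f (t - u) • g u) t
  simp only [sub_sub_cancel, sub_self, sub_zero] at hsub
  rw [hsub, intervalIntegral.integral_of_le ht, integral_indicator measurableSet_Ioc,
    Measure.restrict_restrict measurableSet_Ioc, inter_eq_left.2 Ioc_subset_Ioi_self]

theorem tendsto_intervalIntegral_smul_comp_sub {f : ℝ → ℝ} {g : ℝ → E} {L C : ℝ}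
    (hf_meas : AEStronglyMeasurable f (volume.restrict (Ici 0)))
    (hf_bdd : ∀ v ≥ 0, |f v| ≤ C) (hf_lim : Tendsto f atTop (𝓝 L))
    (hg : IntegrableOn g (Ioi 0)) :
    Tendsto (fun t => ∫ v in (0:ℝ)..t, f v • g (t - v)) atTop (𝓝 (L • ∫ v in Ioi 0, g v)) := by
  have hf₀ : AEStronglyMeasurable ((Ici 0).indicator f) :=
    (aestronglyMeasurable_indicator_iff measurableSet_Ici).2 hf_meas
  have hmeas : ∀ t, AEStronglyMeasurable
      ((Ioc 0 t).indicator fun u => f (t - u) • g u) (volume.restrict (Ioi 0)) := by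
    intro t
    refine (aestronglyMeasurable_indicator_iff measurableSet_Ioc).2 ?_
    rw [Measure.restrict_restrict measurableSet_Ioc, inter_eq_left.2 Ioc_subset_Ioi_self]
    have hft : AEStronglyMeasurable (fun u => f (t - u)) (volume.restrict (Ioc 0 t)) := by
      refine (hf₀.comp_measurePreserving
        (Measure.measurePreserving_sub_left volume t)).restrict.congr ?_
      filter_upwards [ae_restrict_mem measurableSet_Ioc] with u hu
      exact indicator_of_mem (mem_Ici.2 (sub_nonneg.2 hu.2)) f
    exact hft.smul (hg.mono_set Ioc_subset_Ioi_self).aestronglyMeasurable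
  have hC : 0 ≤ C := (abs_nonneg _).trans (hf_bdd 0 le_rfl)
  have hbound : ∀ t u, ‖(Ioc 0 t).indicator (fun u => f (t - u) • g u) u‖ ≤ C * ‖g u‖ := by
    intro t u
    by_cases hu : u ∈ Ioc 0 t
    · rw [indicator_of_mem hu, norm_smul, Real.norm_eq_abs]
      exact mul_le_mul_of_nonneg_right (hf_bdd _ (sub_nonneg.2 hu.2)) (norm_nonneg _)
    · rw [indicator_of_notMem hu, norm_zero]
      positivity
  have hlim : ∀ u > 0, Tendsto (fun t => (Ioc 0 t).indicator (fun u => f (t - u) • g u) u)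
      atTop (𝓝 (L • g u)) := by
    intro u hu
    have hshift : Tendsto (fun t => f (t - u)) atTop (𝓝 L) :=
      hf_lim.comp (tendsto_atTop_add_const_right _ (-u) tendsto_id)
    refine (hshift.smul_const (g u)).congr' ?_
    filter_upwards [eventually_ge_atTop u] with t ht
    rw [indicator_of_mem (show u ∈ Ioc 0 t from ⟨hu, ht⟩)]
  rw [← integral_smul]
  refine (tendsto_integral_filter_of_dominated_convergence (fun u => C * ‖g u‖)
    (Eventually.of_forall hmeas) (Eventually.of_forall fun t => ae_of_all _ (hbound t))
    (hg.norm.const_mul C) ((ae_restrict_mem measurableSet_Ioi).mono hlim)).congr' ?_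
  filter_upwards [eventually_ge_atTop 0] with t ht
  exact (intervalIntegral_smul_comp_sub_eq_integral_indicator ht).symm

end

theorem pension_fund_long_run_equilibrium_general
    (G_A G_B : ℝ → ℝ)
    (hGA_mono : MonotoneOn G_A (Set.Ici 0))
    (hGA_bdd : ∀ v ≥ (0:ℝ), 0 ≤ G_A v ∧ G_A v ≤ 1)
    (hGA_lim : Tendsto G_A atTop (nhds 1))
    (hGA_int : IntegrableOn (fun v => 1 - G_A v) (Set.Ici 0))
    (hGB_int : IntegrableOn (fun v => 1 - G_B v) (Set.Ici 0))
    (α_A α_B : ℝ)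
    (hαA : α_A = ∫ v in Set.Ioi (0:ℝ), (1 - G_A v))
    (hαB : α_B = ∫ v in Set.Ioi (0:ℝ), (1 - G_B v))
    (lam_A lam_B : ℝ)
    (p : ℝ)
    (m_A m_B : ℝ → ℝ) (mA_inf mB_inf : ℝ)
    (hmA : Tendsto m_A atTop (nhds mA_inf))
    (hmB : Tendsto m_B atTop (nhds mB_inf))
    (heq : ∀ t ≥ (0:ℝ),
      m_A t * (lam_A * ∫ v in (0:ℝ)..t, (1 - G_A v))
        = m_B t * ∫ v in (0:ℝ)..t, (p * lam_A * G_A v + lam_B) * (1 - G_B (t - v))) :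
    mA_inf * lam_A * α_A = mB_inf * ((p * lam_A + lam_B) * α_B) := by
  have hA : Tendsto (fun t => ∫ v in (0:ℝ)..t, (1 - G_A v)) atTop (𝓝 α_A) :=
    hαA ▸ intervalIntegral_tendsto_integral_Ioi 0 (hGA_int.mono_set Ioi_subset_Ici_self)
      tendsto_id
  have hB : Tendsto (fun t => ∫ v in (0:ℝ)..t, (p * lam_A * G_A v + lam_B) * (1 - G_B (t - v)))
      atTop (𝓝 ((p * lam_A + lam_B) * α_B)) := by
    have hmeas : AEStronglyMeasurable (fun v => p * lam_A * G_A v + lam_B)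
        (volume.restrict (Ici 0)) :=
      ((aemeasurable_restrict_of_monotoneOn measurableSet_Ici hGA_mono).const_mul _
        |>.add_const _).aestronglyMeasurable
    have hbdd : ∀ v ≥ (0:ℝ), |p * lam_A * G_A v + lam_B| ≤ |p * lam_A| + |lam_B| := by
      intro v hv
      have hG : |G_A v| ≤ 1 := abs_le.2 ⟨by linarith [(hGA_bdd v hv).1], (hGA_bdd v hv).2⟩
      calc |p * lam_A * G_A v + lam_B| ≤ |p * lam_A| * |G_A v| + |lam_B| := by
            rw [← abs_mul]; exact abs_add_le _ _
        _ ≤ |p * lam_A| + |lam_B| := by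
            gcongr; exact mul_le_of_le_one_right (abs_nonneg _) hG
    have hlim : Tendsto (fun v => p * lam_A * G_A v + lam_B) atTop (𝓝 (p * lam_A + lam_B)) := by
      simpa using (hGA_lim.const_mul (p * lam_A)).add_const lam_B
    simpa [hαB] using tendsto_intervalIntegral_smul_comp_sub hmeas hbdd hlim
      (hGB_int.mono_set Ioi_subset_Ici_self)
  rw [mul_assoc]
  refine tendsto_nhds_unique ((hmA.mul (hA.const_mul lam_A)).congr' ?_) (hmB.mul hB)
  filter_upwards [eventually_ge_atTop 0] with t ht using heq t ht

/-- Long-run equilibrium condition (Eq. (3)) of the pensions fund network: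
if the equilibrium equation holds for all `t ≥ 0` and the unitary contribution and
pension means converge, then `m_A∞·λ_A·α_A = m_B∞·(p·λ_A + λ_B)·α_B`. -/
theorem pension_fund_long_run_equilibrium
    (G_A G_B : ℝ → ℝ)
    (hGA_mono : MonotoneOn G_A (Set.Ici 0))
    (hGB_mono : MonotoneOn G_B (Set.Ici 0))
    (hGA_bdd : ∀ v ≥ (0:ℝ), 0 ≤ G_A v ∧ G_A v ≤ 1)
    (hGB_bdd : ∀ v ≥ (0:ℝ), 0 ≤ G_B v ∧ G_B v ≤ 1)
    (hGA_lim : Tendsto G_A atTop (nhds 1))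
    (hGB_lim : Tendsto G_B atTop (nhds 1))
    (hGA_int : IntegrableOn (fun v => 1 - G_A v) (Set.Ici 0))
    (hGB_int : IntegrableOn (fun v => 1 - G_B v) (Set.Ici 0))
    (α_A α_B : ℝ)
    (hαA : α_A = ∫ v in Set.Ioi (0:ℝ), (1 - G_A v))
    (hαB : α_B = ∫ v in Set.Ioi (0:ℝ), (1 - G_B v))
    (lam_A lam_B : ℝ) (hlamA : 0 ≤ lam_A) (hlamB : 0 ≤ lam_B)
    (p : ℝ) (hp : p ∈ Set.Icc (0:ℝ) 1)
    (m_A m_B : ℝ → ℝ) (mA_inf mB_inf : ℝ)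
    (hmA : Tendsto m_A atTop (nhds mA_inf))
    (hmB : Tendsto m_B atTop (nhds mB_inf))
    (heq : ∀ t ≥ (0:ℝ),
      m_A t * (lam_A * ∫ v in (0:ℝ)..t, (1 - G_A v))
        = m_B t * ∫ v in (0:ℝ)..t, (p * lam_A * G_A v + lam_B) * (1 - G_B (t - v)))
    (hA_pos : 0 < lam_A * α_A)
    (hB_pos : 0 < (p * lam_A + lam_B) * α_B) :
    mA_inf * lam_A * α_A = mB_inf * ((p * lam_A + lam_B) * α_B) :=
  pension_fund_long_run_equilibrium_general G_A G_B hGA_mono hGA_bdd hGA_lim hGA_int hGB_int α_A α_B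
    hαA hαB lam_A lam_B p m_A m_B mA_inf mB_inf hmA hmB heq
end

section
/- Let G_A, G_B : ℝ → ℝ be service-time distribution functions (monotone nondecreasing on [0,∞), with 0 ≤ G(v) ≤ 1 for v ≥ 0 and G(v) → 1 as v → ∞), such that v ↦ 1 − G_B(v) is integrable on [0,∞) with α_B = ∫₀^∞ (1 − G_B(v)) dv. Let λ_A, λ_B ≥ 0 and p ∈ [0,1]. Then lim_{t→∞} ∫₀ᵗ (p·λ_A·G_A(v) + λ_B)·(1 − G_B(t − v)) dv = (p·λ_A + λ_B)·α_B. -/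
/-! Substituting `u = t - v` turns the integral into `∫_{(0,t]} f(t - u) (1 - G_B u) du` with
`f = p λ_A G_A + λ_B` bounded on `[0, ∞)` and tending to `p λ_A + λ_B`; dominated convergence,
with majorant `sup |f| · |1 - G_B|`, gives the limit. -/

open MeasureTheory Filter Real Set

theorem intervalIntegral_mul_comp_sub_eq_integral_indicator (f h : ℝ → ℝ) {t : ℝ} (ht : 0 ≤ t) :
    ∫ v in (0:ℝ)..t, f v * h (t - v) =
      ∫ u in Ioi 0, (Ioc 0 t).indicator (fun u => f (t - u) * h u) u := by
  calc ∫ v in (0:ℝ)..t, f v * h (t - v)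
      = ∫ u in (0:ℝ)..t, f (t - u) * h u := by
        simpa using (intervalIntegral.integral_comp_sub_left (a := 0) (b := t)
          (fun u => f (t - u) * h u) t)
    _ = ∫ u in Ioc 0 t, f (t - u) * h u := intervalIntegral.integral_of_le ht
    _ = ∫ u in Ioi 0, (Ioc 0 t).indicator (fun u => f (t - u) * h u) u := by
        rw [integral_indicator measurableSet_Ioc, Measure.restrict_restrict measurableSet_Ioc,
          inter_eq_left.mpr Ioc_subset_Ioi_self]

theorem tendsto_intervalIntegral_mul_comp_sub {f h : ℝ → ℝ} {c C : ℝ}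
    (hf_meas : AEStronglyMeasurable f) (hf_bdd : ∀ v ≥ 0, |f v| ≤ C)
    (hf_lim : Tendsto f atTop (nhds c)) (hh : IntegrableOn h (Ioi 0)) :
    Tendsto (fun t => ∫ v in (0:ℝ)..t, f v * h (t - v)) atTop
      (nhds (c * ∫ u in Ioi 0, h u)) := by
  have hlim : Tendsto (fun t => ∫ u in Ioi 0, (Ioc 0 t).indicator (fun u => f (t - u) * h u) u)
      atTop (nhds (∫ u in Ioi 0, c * h u)) := by
    refine tendsto_integral_filter_of_dominated_convergence (fun u => C * |h u|) ?_ ?_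
      (hh.norm.const_mul C) ?_
    · refine .of_forall fun t => AEStronglyMeasurable.indicator ?_ measurableSet_Ioc
      have : AEStronglyMeasurable (fun u => f (t - u)) :=
        hf_meas.comp_quasiMeasurePreserving
          (volume.measurePreserving_sub_left t).quasiMeasurePreserving
      exact this.restrict.mul hh.aestronglyMeasurable
    · refine .of_forall fun t => .of_forall fun u => ?_
      by_cases hu : u ∈ Ioc 0 t
      · rw [indicator_of_mem hu, norm_mul, Real.norm_eq_abs, Real.norm_eq_abs]
        exact mul_le_mul_of_nonneg_right (hf_bdd _ (sub_nonneg.mpr hu.2)) (abs_nonneg _)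
      · rw [indicator_of_notMem hu, norm_zero]
        exact mul_nonneg ((abs_nonneg _).trans (hf_bdd 0 le_rfl)) (abs_nonneg _)
    · filter_upwards [ae_restrict_mem measurableSet_Ioi] with u hu
      have hshift : Tendsto (fun t => f (t - u) * h u) atTop (nhds (c * h u)) :=
        (hf_lim.comp (tendsto_atTop_add_const_right atTop (-u) tendsto_id)).mul_const (h u)
      refine hshift.congr' ?_
      filter_upwards [eventually_ge_atTop u] with t hut
      exact (indicator_of_mem (show u ∈ Ioc 0 t from ⟨hu, hut⟩) fun u => f (t - u) * h u).symm
  rw [← integral_const_mul]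
  refine hlim.congr' ?_
  filter_upwards [eventually_ge_atTop 0] with t ht
  exact (intervalIntegral_mul_comp_sub_eq_integral_indicator f h ht).symm

theorem MonotoneOn.measurable_comp_max {g : ℝ → ℝ} {a : ℝ} (hg : MonotoneOn g (Ici a)) :
    Measurable fun v => g (max v a) :=
  Monotone.measurable fun _ _ hxy =>
    hg (le_max_right _ a) (le_max_right _ a) (max_le_max hxy le_rfl)

theorem pensioners_poisson_parameter_limit_general
    (G_A G_B : ℝ → ℝ)
    (hGA_mono : MonotoneOn G_A (Set.Ici 0))
    (hGA_bdd : ∀ v ≥ (0:ℝ), 0 ≤ G_A v ∧ G_A v ≤ 1)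
    (hGA_lim : Tendsto G_A atTop (nhds 1))
    (hGB_int : IntegrableOn (fun v => 1 - G_B v) (Set.Ici 0))
    (α_B : ℝ) (hαB : α_B = ∫ v in Set.Ioi (0:ℝ), (1 - G_B v))
    (lam_A lam_B : ℝ)
    (p : ℝ) :
    Tendsto (fun t => ∫ v in (0:ℝ)..t, (p * lam_A * G_A v + lam_B) * (1 - G_B (t - v)))
      atTop (nhds ((p * lam_A + lam_B) * α_B)) := by
  set f : ℝ → ℝ := fun v => p * lam_A * G_A (max v 0) + lam_B
  have hf_bdd : ∀ v ≥ 0, |f v| ≤ |p * lam_A| + |lam_B| := fun v _ => by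
    have hG := hGA_bdd (max v 0) (le_max_right v 0)
    calc |f v| ≤ |p * lam_A| * |G_A (max v 0)| + |lam_B| := by
          simpa only [abs_mul] using abs_add_le (p * lam_A * G_A (max v 0)) lam_B
      _ ≤ |p * lam_A| + |lam_B| := by
          gcongr
          exact mul_le_of_le_one_right (abs_nonneg _) (abs_le.mpr ⟨by linarith, hG.2⟩)
  have hf_lim : Tendsto f atTop (nhds (p * lam_A + lam_B)) := by
    simpa using ((hGA_lim.comp (tendsto_atTop_mono (le_max_left · 0) tendsto_id)).const_mul
      (p * lam_A)).add_const lam_B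
  have hf_meas : AEStronglyMeasurable f :=
    ((hGA_mono.measurable_comp_max.const_mul _).add_const _).aestronglyMeasurable
  rw [hαB]
  refine (tendsto_intervalIntegral_mul_comp_sub hf_meas hf_bdd hf_lim
    (hGB_int.mono_set Ioi_subset_Ici_self)).congr' ?_
  filter_upwards [eventually_ge_atTop 0] with t ht
  refine intervalIntegral.integral_congr fun v hv => ?_
  rw [uIcc_of_le ht] at hv
  simp only [f, max_eq_left hv.1]

/-- The Poisson parameter of the number of pensioners at node `B` converges to
`(p·λ_A + λ_B)·α_B` as `t → ∞`. -/
theorem pensioners_poisson_parameter_limit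
    (G_A G_B : ℝ → ℝ)
    (hGA_mono : MonotoneOn G_A (Set.Ici 0))
    (hGB_mono : MonotoneOn G_B (Set.Ici 0))
    (hGA_bdd : ∀ v ≥ (0:ℝ), 0 ≤ G_A v ∧ G_A v ≤ 1)
    (hGB_bdd : ∀ v ≥ (0:ℝ), 0 ≤ G_B v ∧ G_B v ≤ 1)
    (hGA_lim : Tendsto G_A atTop (nhds 1))
    (hGB_lim : Tendsto G_B atTop (nhds 1))
    (hGB_int : IntegrableOn (fun v => 1 - G_B v) (Set.Ici 0))
    (α_B : ℝ) (hαB : α_B = ∫ v in Set.Ioi (0:ℝ), (1 - G_B v))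
    (lam_A lam_B : ℝ) (hlamA : 0 ≤ lam_A) (hlamB : 0 ≤ lam_B)
    (p : ℝ) (hp : p ∈ Set.Icc (0:ℝ) 1) :
    Tendsto (fun t => ∫ v in (0:ℝ)..t, (p * lam_A * G_A v + lam_B) * (1 - G_B (t - v)))
      atTop (nhds ((p * lam_A + lam_B) * α_B)) :=
  pensioners_poisson_parameter_limit_general G_A G_B hGA_mono hGA_bdd hGA_lim hGB_int α_B hαB lam_A
    lam_B p
end

section
/- Let γ > 0, ρ > 0 and β > −γ, and define G(v) = 1 − (1 − exp(−ρ))·(γ + β)/(γ·(exp(−ρ)·(exp((γ + β)·v) − 1) + 1)) for v ≥ 0. Then lim_{t→∞} ∫₀ᵗ (1 − G(v)) dv = ρ/γ; that is, the mean of the distribution G equals ρ/γ. -/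
/-!
With `q = exp (-ρ) ∈ (0, 1)` and `a = γ + β > 0`, the integrand is
`(1 - q) a / (γ (q (exp (a v) - 1) + 1))`, which has the antiderivative
`-log (q + (1 - q) exp (-a v)) / γ`. This vanishes at `v = 0` and tends to
`-log q / γ = ρ / γ` as `v → ∞`.
-/

open MeasureTheory Filter Real Set Topology

section LogisticMean

variable {q a : ℝ}

lemma mul_exp_sub_one_add_one_pos (hq₀ : 0 < q) (hq₁ : q ≤ 1) (x : ℝ) :
    0 < q * (exp x - 1) + 1 := by
  nlinarith [mul_pos hq₀ (exp_pos x)]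

lemma add_one_sub_mul_exp_neg_eq (x : ℝ) :
    q + (1 - q) * exp (-x) = exp (-x) * (q * (exp x - 1) + 1) := by
  rw [exp_neg]
  field_simp
  ring

lemma hasDerivAt_neg_log_add_one_sub_mul_exp (hq₀ : 0 < q) (hq₁ : q ≤ 1) (v : ℝ) :
    HasDerivAt (fun v => -log (q + (1 - q) * exp (-(a * v))))
      ((1 - q) * a / (q * (exp (a * v) - 1) + 1)) v := by
  have hden := mul_exp_sub_one_add_one_pos hq₀ hq₁ (a * v)
  have hinner : HasDerivAt (fun v => q + (1 - q) * exp (-(a * v)))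
      ((1 - q) * (exp (-(a * v)) * -a)) v := by
    simpa using (((hasDerivAt_id v).const_mul a).neg.exp.const_mul (1 - q)).const_add q
  have hmix : q + (1 - q) * exp (-(a * v)) ≠ 0 := by
    rw [add_one_sub_mul_exp_neg_eq]
    positivity
  refine (hinner.log hmix).neg.congr_deriv ?_
  rw [add_one_sub_mul_exp_neg_eq]
  field_simp

lemma integral_div_add_one_sub_mul_exp (hq₀ : 0 < q) (hq₁ : q ≤ 1) (t : ℝ) :
    ∫ v in (0:ℝ)..t, (1 - q) * a / (q * (exp (a * v) - 1) + 1) =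
      -log (q + (1 - q) * exp (-(a * t))) := by
  have hcont : Continuous fun v => (1 - q) * a / (q * (exp (a * v) - 1) + 1) := by
    fun_prop (disch := exact fun v => (mul_exp_sub_one_add_one_pos hq₀ hq₁ (a * v)).ne')
  rw [intervalIntegral.integral_eq_sub_of_hasDerivAt
    (fun v _ => hasDerivAt_neg_log_add_one_sub_mul_exp hq₀ hq₁ v)
    (hcont.intervalIntegrable 0 t)]
  simp

lemma tendsto_neg_log_add_one_sub_mul_exp (hq₀ : 0 < q) (ha : 0 < a) :
    Tendsto (fun t => -log (q + (1 - q) * exp (-(a * t)))) atTop (𝓝 (-log q)) := by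
  have hexp : Tendsto (fun t => exp (-(a * t))) atTop (𝓝 0) :=
    tendsto_exp_neg_atTop_nhds_zero.comp (tendsto_id.const_mul_atTop ha)
  have := ((hexp.const_mul (1 - q)).const_add q).log (by simpa using hq₀.ne')
  simpa using this.neg

end LogisticMean

theorem particular_family_mean_general
    (γ ρ β : ℝ) (hρ : 0 < ρ) (hβ : -γ < β) :
    Tendsto
      (fun t => ∫ v in (0:ℝ)..t,
        (1 - (1 - (1 - Real.exp (-ρ)) * (γ + β)
          / (γ * (Real.exp (-ρ) * (Real.exp ((γ + β) * v) - 1) + 1)))))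
      atTop (nhds (ρ / γ)) := by
  have hq₁ : exp (-ρ) ≤ 1 := exp_le_one_iff.mpr (by linarith)
  have hintegral (t : ℝ) : (∫ v in (0:ℝ)..t,
      (1 - (1 - (1 - exp (-ρ)) * (γ + β)
        / (γ * (exp (-ρ) * (exp ((γ + β) * v) - 1) + 1))))) =
      -log (exp (-ρ) + (1 - exp (-ρ)) * exp (-((γ + β) * t))) / γ := by
    simp_rw [sub_sub_cancel, mul_comm γ, ← div_div, intervalIntegral.integral_div,
      integral_div_add_one_sub_mul_exp (exp_pos _) hq₁]
  simp_rw [hintegral]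
  simpa using (tendsto_neg_log_add_one_sub_mul_exp (exp_pos (-ρ)) (by linarith)).div_const γ

/-- The mean of the particular family of service-time distribution functions equals
`ρ/γ`:  `lim_{t→∞} ∫₀ᵗ (1 − G(v)) dv = ρ/γ`. -/
theorem particular_family_mean
    (γ ρ β : ℝ) (hγ : 0 < γ) (hρ : 0 < ρ) (hβ : -γ < β) :
    Tendsto
      (fun t => ∫ v in (0:ℝ)..t,
        (1 - (1 - (1 - Real.exp (-ρ)) * (γ + β)
          / (γ * (Real.exp (-ρ) * (Real.exp ((γ + β) * v) - 1) + 1)))))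
      atTop (nhds (ρ / γ)) :=
  particular_family_mean_general γ ρ β hρ hβ
end
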